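/- For every real number ω one has A₊(ω) ≠ 0, and A₋(ω) is the complex conjugate of A₊(ω); in particular |A₋(ω)| = |A₊(ω)| and the quotient -A₋(ω)/A₊(ω) lies on the unit circle. -/

import Mathlib

/-!
Schwarz reflection gives `Ai (conj z) = conj (Ai z)`, hence `A₋(ω) = conj A₊(ω)` for real `ω`.
With `c = e^{-iπ/3}`, both `Ai (c z)` and `Ai (c̄ z)` solve `w'' = c³ z w = -z w`, so their
Wronskian is constant, equal to its value `Ai 0 · Ai' 0 · (c̄ - c) ≠ 0` at the origin. A real zero
of `A₊` would, by reflection, be a common zero of both solutions and make the Wronskian vanish.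
-/

open Complex Real

noncomputable section

/-- Defining properties of the Airy function `Ai : ℂ → ℂ`: it is the (unique) entire
solution of `w'' (z) = z · w(z)` with `Ai 0 = 3^{-2/3}/Γ(2/3)`,
`Ai' 0 = -3^{-1/3}/Γ(1/3)`, and `Ai` is real-valued on `ℝ`. -/
structure IsAiry (Ai : ℂ → ℂ) : Prop where
  entire : Differentiable ℂ Ai
  ode : ∀ z : ℂ, iteratedDeriv 2 Ai z = z * Ai z
  init0 : Ai 0 = (3 : ℂ) ^ (-(2 : ℂ) / 3) / Complex.Gamma (2 / 3)
  init1 : deriv Ai 0 = -((3 : ℂ) ^ (-(1 : ℂ) / 3)) / Complex.Gamma (1 / 3)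
  realOnReal : ∀ x : ℝ, (Ai (x : ℂ)).im = 0

/-- `A₊(z) = e^{-iπ/3} · Ai(e^{-iπ/3} z)`. -/
def Aplus (Ai : ℂ → ℂ) (z : ℂ) : ℂ :=
  Complex.exp (-((Real.pi : ℂ) / 3) * Complex.I) *
    Ai (Complex.exp (-((Real.pi : ℂ) / 3) * Complex.I) * z)

/-- `A₋(z) = e^{iπ/3} · Ai(e^{iπ/3} z)`. -/
def Aminus (Ai : ℂ → ℂ) (z : ℂ) : ℂ :=
  Complex.exp (((Real.pi : ℂ) / 3) * Complex.I) *
    Ai (Complex.exp (((Real.pi : ℂ) / 3) * Complex.I) * z)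

open Filter Topology ComplexConjugate

theorem Complex.tendsto_ofReal_nhdsNE_zero :
    Tendsto ((↑) : ℝ → ℂ) (𝓝[≠] 0) (𝓝[≠] 0) :=
  tendsto_nhdsWithin_of_tendsto_nhds_of_eventually_within _
    (by simpa using Complex.continuous_ofReal.continuousWithinAt.tendsto (x := 0) (s := {0}ᶜ))
    (eventually_nhdsWithin_of_forall fun _ hx ↦ Complex.ofReal_ne_zero.mpr hx)

theorem Differentiable.apply_conj_of_real {f : ℂ → ℂ} (hf : Differentiable ℂ f)
    (hreal : ∀ x : ℝ, (f x).im = 0) (z : ℂ) : f (conj z) = conj (f z) := by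
  have hg : Differentiable ℂ (conj ∘ f ∘ conj) := fun w ↦ by
    simpa using (hf (conj w)).conj_conj
  have hfg : ∃ᶠ w in 𝓝[≠] (0 : ℂ), f w = (conj ∘ f ∘ conj) w :=
    Complex.tendsto_ofReal_nhdsNE_zero.frequently <| Eventually.frequently <|
      Eventually.of_forall fun x : ℝ ↦ by simpa using (Complex.conj_eq_iff_im.mpr (hreal x)).symm
  have := congrFun ((analyticOnNhd_univ_iff_differentiable.mpr hf).eq_of_frequently_eq
    (analyticOnNhd_univ_iff_differentiable.mpr hg) hfg) (conj z)
  simpa using this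

theorem wronskian_eq_of_hasDerivAt {𝕜 : Type*} [RCLike 𝕜] {f f' g g' q : 𝕜 → 𝕜}
    (hf : ∀ z, HasDerivAt f (f' z) z) (hf' : ∀ z, HasDerivAt f' (q z * f z) z)
    (hg : ∀ z, HasDerivAt g (g' z) z) (hg' : ∀ z, HasDerivAt g' (q z * g z) z) (x y : 𝕜) :
    f x * g' x - f' x * g x = f y * g' y - f' y * g y := by
  have hW (z : 𝕜) : HasDerivAt (fun z ↦ f z * g' z - f' z * g z) 0 z :=
    (((hf z).mul (hg' z)).sub ((hf' z).mul (hg z))).congr_deriv (by ring)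
  exact is_const_of_deriv_eq_zero (fun z ↦ (hW z).differentiableAt) (fun z ↦ (hW z).deriv) x y

theorem HasDerivAt.comp_const_mul {𝕜 : Type*} [NontriviallyNormedField 𝕜] {f : 𝕜 → 𝕜}
    {f' c z : 𝕜} (hf : HasDerivAt f f' (c * z)) : HasDerivAt (fun w ↦ f (c * w)) (c * f') z :=
  (hf.comp z ((hasDerivAt_id z).const_mul c)).congr_deriv (by ring)

namespace IsAiry

variable {Ai : ℂ → ℂ} (hAi : IsAiry Ai)
include hAi

theorem conj_apply (z : ℂ) : Ai (conj z) = conj (Ai z) :=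
  hAi.entire.apply_conj_of_real hAi.realOnReal z

theorem hasDerivAt (z : ℂ) : HasDerivAt Ai (deriv Ai z) z :=
  (hAi.entire z).hasDerivAt

theorem hasDerivAt_deriv (z : ℂ) : HasDerivAt (deriv Ai) (z * Ai z) z := by
  rw [← hAi.ode z, iteratedDeriv_succ, iteratedDeriv_one]
  exact (hAi.entire.deriv z).hasDerivAt

theorem apply_zero_ne_zero : Ai 0 ≠ 0 := by
  rw [hAi.init0]
  exact div_ne_zero (cpow_ne_zero_iff.mpr (.inl three_ne_zero))
    (Gamma_ne_zero_of_re_pos (by norm_num))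

theorem deriv_zero_ne_zero : deriv Ai 0 ≠ 0 := by
  rw [hAi.init1]
  exact div_ne_zero (neg_ne_zero.mpr (cpow_ne_zero_iff.mpr (.inl three_ne_zero)))
    (Gamma_ne_zero_of_re_pos (by norm_num))

-- `z ↦ Ai (c z)` solves `w'' = c³ z w`.
theorem hasDerivAt_deriv_comp_const_mul (c z : ℂ) :
    HasDerivAt (fun w ↦ c * deriv Ai (c * w)) (c ^ 3 * z * Ai (c * z)) z :=
  (((hAi.hasDerivAt_deriv (c * z)).comp_const_mul).const_mul c).congr_deriv (by ring)

theorem apply_mul_ofReal_ne_zero {c : ℂ} (hc3 : (c ^ 3).im = 0) (hc : c.im ≠ 0) (x : ℝ) :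
    Ai (c * x) ≠ 0 := by
  intro hx
  have hx' : Ai (conj c * x) = 0 := by rw [← conj_ofReal, ← map_mul, hAi.conj_apply, hx, map_zero]
  have hconj3 : conj c ^ 3 = c ^ 3 := by rw [← map_pow, conj_eq_iff_im.mpr hc3]
  have hW := wronskian_eq_of_hasDerivAt (q := fun z ↦ c ^ 3 * z)
    (fun z ↦ (hAi.hasDerivAt (c * z)).comp_const_mul) (hAi.hasDerivAt_deriv_comp_const_mul c)
    (fun z ↦ (hAi.hasDerivAt (conj c * z)).comp_const_mul)
    (by simpa only [hconj3] using hAi.hasDerivAt_deriv_comp_const_mul (conj c)) x 0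
  have hcc : conj c - c ≠ 0 := by
    rw [← neg_sub, sub_conj]
    simpa using hc
  simp only [hx, hx', mul_zero, zero_mul, sub_zero] at hW
  exact mul_ne_zero (mul_ne_zero hAi.apply_zero_ne_zero hAi.deriv_zero_ne_zero) hcc
    (by linear_combination -hW)

end IsAiry

theorem conj_exp_neg_pi_div_three_mul_I :
    conj (exp (-(π / 3 : ℂ) * I)) = exp ((π / 3 : ℂ) * I) := by
  rw [← exp_conj]
  simp [map_ofNat]

theorem exp_neg_pi_div_three_mul_I_pow_three : exp (-(π / 3 : ℂ) * I) ^ 3 = -1 := by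
  rw [← Complex.exp_nat_mul, show ((3 : ℕ) : ℂ) * (-(π / 3 : ℂ) * I) = -(π * I) by push_cast; ring,
    Complex.exp_neg, exp_pi_mul_I, inv_neg, inv_one]

theorem exp_neg_pi_div_three_mul_I_im : (exp (-(π / 3 : ℂ) * I)).im = -(√3 / 2) := by
  rw [show -(π / 3 : ℂ) = ((-(π / 3) : ℝ) : ℂ) by push_cast; ring, exp_ofReal_mul_I_im,
    Real.sin_neg, sin_pi_div_three]

theorem Aminus_ofReal_eq_conj_Aplus {Ai : ℂ → ℂ} (hAi : IsAiry Ai) (x : ℝ) :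
    Aminus Ai x = conj (Aplus Ai x) := by
  rw [Aplus, Aminus, map_mul, conj_exp_neg_pi_div_three_mul_I, ← hAi.conj_apply, map_mul,
    conj_exp_neg_pi_div_three_mul_I, conj_ofReal]

theorem Aplus_ofReal_ne_zero {Ai : ℂ → ℂ} (hAi : IsAiry Ai) (x : ℝ) : Aplus Ai x ≠ 0 :=
  mul_ne_zero (exp_ne_zero _) <| hAi.apply_mul_ofReal_ne_zero
    (by rw [exp_neg_pi_div_three_mul_I_pow_three, neg_im, one_im, neg_zero])
    (by rw [exp_neg_pi_div_three_mul_I_im]; exact neg_ne_zero.mpr (by positivity)) x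

/-- For every real `ω`: `A₊(ω) ≠ 0`, `A₋(ω)` is the complex conjugate of `A₊(ω)`;
in particular `|A₋(ω)| = |A₊(ω)|` and `-A₋(ω)/A₊(ω)` lies on the unit circle. -/
theorem Aplus_ne_zero_and_Aminus_conj (Ai : ℂ → ℂ) (hAi : IsAiry Ai) (ω : ℝ) :
    Aplus Ai (ω : ℂ) ≠ 0 ∧
    Aminus Ai (ω : ℂ) = starRingEnd ℂ (Aplus Ai (ω : ℂ)) ∧
    ‖Aminus Ai (ω : ℂ)‖ = ‖Aplus Ai (ω : ℂ)‖ ∧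
    ‖-(Aminus Ai (ω : ℂ)) / Aplus Ai (ω : ℂ)‖ = 1 := by
  have hne := Aplus_ofReal_ne_zero hAi ω
  have hconj := Aminus_ofReal_eq_conj_Aplus hAi ω
  have hnorm : ‖Aminus Ai ω‖ = ‖Aplus Ai ω‖ := by rw [hconj, norm_conj]
  refine ⟨hne, hconj, hnorm, ?_⟩
  rw [norm_div, norm_neg, hnorm, div_self (norm_ne_zero_iff.mpr hne)]

end
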